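/- arXiv:2108.08979 — 2 statements merged into one kernel-verified Lean document; each statement's English description precedes it below -/
import Mathlib

section
/- If an orthogonal-factor angle function φ : ℝ² → ℝ satisfies the system of PDEs cos φ − φ_y sin φ = φ_x cos φ and φ_y cos φ = φ_x sin φ on an open set where cos φ ≠ 0, then φ satisfies the ODE φ_x = cos² φ, and hence tan φ(x,y) = x + c(y) for some function c of y alone; moreover, substituting back into φ_y = φ_x tan φ forces c'(y) = x + c(y), which is impossible since c does not depend on x. -/
/-!
Solving the system pointwise for the partials gives `φ_x = cos² φ` and `φ_y = cos φ sin φ`,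
so `g = tan φ` satisfies `g_x = 1` and `g_y = g`. Symmetry of the second derivative of `g` then
yields `0 = ∂_y g_x = ∂_x g_y = g_x = 1`.
-/

open Filter Topology ContinuousLinearMap

theorem ContinuousLinearMap.eq_smul_fst_add_smul_snd (ℓ : ℝ × ℝ →L[ℝ] ℝ) :
    ℓ = ℓ (1, 0) • fst ℝ ℝ ℝ + ℓ (0, 1) • snd ℝ ℝ ℝ := by
  ext <;> simp

theorem mixed_partials_eq_of_eventually_hasFDerivAt {f a b : ℝ × ℝ → ℝ}
    {a' b' : ℝ × ℝ →L[ℝ] ℝ} {x : ℝ × ℝ}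
    (hf : ∀ᶠ y in 𝓝 x, HasFDerivAt f (a y • fst ℝ ℝ ℝ + b y • snd ℝ ℝ ℝ) y)
    (ha : HasFDerivAt a a' x) (hb : HasFDerivAt b b' x) :
    a' (0, 1) = b' (1, 0) := by
  simpa using second_derivative_symmetric_of_eventually hf
    ((ha.smul_const (fst ℝ ℝ ℝ)).add (hb.smul_const (snd ℝ ℝ ℝ))) (0, 1) (1, 0)

theorem not_eventually_hasFDerivAt_fst_add_smul_snd_self (f : ℝ × ℝ → ℝ) (x : ℝ × ℝ) :
    ¬ ∀ᶠ y in 𝓝 x, HasFDerivAt f (fst ℝ ℝ ℝ + f y • snd ℝ ℝ ℝ) y := by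
  intro hf
  have := mixed_partials_eq_of_eventually_hasFDerivAt (a := fun _ ↦ 1) (by simpa using hf)
    (hasFDerivAt_const 1 x) hf.self_of_nhds
  simp at this

theorem partials_eq_of_rotation_system {θ a b : ℝ} (hcos : Real.cos θ ≠ 0)
    (h1 : Real.cos θ - b * Real.sin θ = a * Real.cos θ)
    (h2 : b * Real.cos θ = a * Real.sin θ) :
    a = Real.cos θ ^ 2 ∧ b = Real.cos θ * Real.sin θ := by
  have ha : a = Real.cos θ ^ 2 := by
    linear_combination (-Real.cos θ) * h1 - Real.sin θ * h2 - a * Real.sin_sq_add_cos_sq θ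
  refine ⟨ha, mul_right_cancel₀ hcos ?_⟩
  rw [h2, ha]
  ring

theorem hasFDerivAt_tan_comp_of_partials {φ : ℝ × ℝ → ℝ} {p : ℝ × ℝ}
    (hφ : HasFDerivAt φ (Real.cos (φ p) ^ 2 • fst ℝ ℝ ℝ
      + (Real.cos (φ p) * Real.sin (φ p)) • snd ℝ ℝ ℝ) p) (hcos : Real.cos (φ p) ≠ 0) :
    HasFDerivAt (Real.tan ∘ φ) (fst ℝ ℝ ℝ + Real.tan (φ p) • snd ℝ ℝ ℝ) p := by
  refine ((Real.hasDerivAt_tan hcos).comp_hasFDerivAt p hφ).congr_fderiv ?_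
  conv_rhs => rw [← one_smul ℝ (fst ℝ ℝ ℝ)]
  rw [smul_add, smul_smul, smul_smul, Real.tan_eq_sin_div_cos]
  congr 2 <;> field_simp

/-- The system of PDEs for the orthogonal-factor angle φ has no C¹ solution on any
nonempty open set where cos φ ≠ 0. -/
theorem stmt3 (φ : ℝ × ℝ → ℝ) (U : Set (ℝ × ℝ)) (hU : IsOpen U) (hne : U.Nonempty)
    (hφ : ContDiff ℝ 1 φ)
    (hcos : ∀ p ∈ U, Real.cos (φ p) ≠ 0)
    (h1 : ∀ p ∈ U, Real.cos (φ p) - fderiv ℝ φ p (0, 1) * Real.sin (φ p)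
        = fderiv ℝ φ p (1, 0) * Real.cos (φ p))
    (h2 : ∀ p ∈ U, fderiv ℝ φ p (0, 1) * Real.cos (φ p)
        = fderiv ℝ φ p (1, 0) * Real.sin (φ p)) :
    False := by
  obtain ⟨p₀, hp₀⟩ := hne
  have htan : ∀ p ∈ U, HasFDerivAt (Real.tan ∘ φ)
      (fst ℝ ℝ ℝ + Real.tan (φ p) • snd ℝ ℝ ℝ) p := by
    intro p hp
    obtain ⟨hx, hy⟩ := partials_eq_of_rotation_system (hcos p hp) (h1 p hp) (h2 p hp)
    have hφp := (hφ.differentiable one_ne_zero p).hasFDerivAt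
    rw [(fderiv ℝ φ p).eq_smul_fst_add_smul_snd, hx, hy] at hφp
    exact hasFDerivAt_tan_comp_of_partials hφp (hcos p hp)
  exact not_eventually_hasFDerivAt_fst_add_smul_snd_self (Real.tan ∘ φ) p₀
    (eventually_of_mem (hU.mem_nhds hp₀) htan)
end

section
/- Let A be a symmetric positive definite d×d matrix, x ∈ ℝ^d fixed, and φ : ℝ^d → ℝ a continuous function satisfying |φ(y)| ≤ C₁ + C₂‖y−x‖^k for constants C₁, C₂ ≥ 0 and k ∈ ℕ. Then for any μ ∈ (0, 1/2), the integral of e^{−(y−x)ᵀA(y−x)/(2ε)} φ(y) over the exterior of the ellipsoid {y : (y−x)ᵀA(y−x) ≤ ε^{2μ}} is bounded in absolute value by ε^{d/2} p(ε^{2μ−1}) e^{−ε^{2μ−1}/2} for some polynomial p; in particular it is o(ε^N) for every N as ε → 0⁺. -/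
/-!
Positive definiteness gives `c ‖v‖² ≤ vᵀ A v`, so `e^{-Q/2} |φ|` (with `Q y = (y-x)ᵀ A (y-x)`)
is dominated by the integrable majorant `G y = (C₁ + C₂ ‖y-x‖^k) e^{-c‖y-x‖²/2}`.
For `ε < 1` and `Q > ε^{2μ}` one has `Q/(2ε) ≥ Q/2 + ε^{2μ-1}/2 - 1/2`, so the tail integral is
at most `e^{1/2} e^{-ε^{2μ-1}/2} ∫ G`. The missing factor `ε^{d/2}` is compensated by
`p = C Xⁿ` with `n (1 - 2μ) ≥ d/2`, since then `ε^{d/2} (ε^{2μ-1})ⁿ ≥ 1`.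
-/

open Matrix MeasureTheory Real Set

lemma integrable_pow_norm_mul_exp_neg_mul_sq_norm {E : Type*} [NormedAddCommGroup E]
    [NormedSpace ℝ E] [FiniteDimensional ℝ E] [MeasurableSpace E] [BorelSpace E]
    (μ : Measure E) [μ.IsAddHaarMeasure] {b : ℝ} (hb : 0 < b) (k : ℕ) :
    Integrable (fun v : E => ‖v‖ ^ k * exp (-b * ‖v‖ ^ 2)) μ := by
  cases subsingleton_or_nontrivial E
  · exact (integrable_const ((0 : ℝ) ^ k)).congr
      (.of_forall fun v => by simp [Subsingleton.elim v 0])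
  · rw [integrable_fun_norm_addHaar μ (f := fun r => r ^ k * exp (-b * r ^ 2))]
    have hs : (-1 : ℝ) < (Module.finrank ℝ E - 1 + k : ℕ) := by
      linarith [(Module.finrank ℝ E - 1 + k).cast_nonneg (α := ℝ)]
    refine (integrableOn_rpow_mul_exp_neg_mul_sq hb hs).congr_fun (fun r _ => ?_)
      measurableSet_Ioi
    simp only [Real.rpow_natCast, smul_eq_mul, pow_add]
    ring

lemma Matrix.PosDef.exists_pos_mul_sq_norm_le {ι : Type*} [Fintype ι] {A : Matrix ι ι ℝ}
    (hA : A.PosDef) : ∃ c > 0, ∀ v : ι → ℝ, c * ‖v‖ ^ 2 ≤ v ⬝ᵥ A *ᵥ v := by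
  cases isEmpty_or_nonempty ι
  · exact ⟨1, one_pos, fun v => by simp [Subsingleton.elim v 0]⟩
  have hQ : Continuous fun v : ι → ℝ => v ⬝ᵥ A *ᵥ v := by fun_prop
  obtain ⟨v₀, hv₀, hmin⟩ := (isCompact_sphere (0 : ι → ℝ) 1).exists_isMinOn
    (NormedSpace.sphere_nonempty.mpr zero_le_one) hQ.continuousOn
  have hv₀0 : v₀ ≠ 0 := ne_zero_of_mem_unit_sphere ⟨v₀, hv₀⟩
  refine ⟨v₀ ⬝ᵥ A *ᵥ v₀, by simpa using hA.re_dotProduct_pos hv₀0, fun v => ?_⟩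
  rcases eq_or_ne v 0 with rfl | hv
  · simp
  have hnorm : 0 < ‖v‖ := norm_pos_iff.mpr hv
  have hunit : ‖v‖⁻¹ • v ∈ Metric.sphere (0 : ι → ℝ) 1 := by
    simp [norm_smul, hnorm.ne']
  calc v₀ ⬝ᵥ A *ᵥ v₀ * ‖v‖ ^ 2 ≤ (‖v‖⁻¹ • v) ⬝ᵥ A *ᵥ (‖v‖⁻¹ • v) * ‖v‖ ^ 2 := by
        gcongr; exact hmin hunit
    _ = v ⬝ᵥ A *ᵥ v := by
        rw [mulVec_smul, smul_dotProduct, dotProduct_smul, smul_eq_mul, smul_eq_mul]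
        field_simp

lemma exp_neg_div_two_mul_le {ε R Q : ℝ} (hε : 0 < ε) (hε1 : ε ≤ 1) (hR : R ≤ 1)
    (hRQ : R ≤ Q) : exp (-Q / (2 * ε)) ≤ exp (1 / 2) * exp (-(R / ε) / 2) * exp (-Q / 2) := by
  rw [← exp_add, ← exp_add, exp_le_exp, div_le_iff₀ (by positivity)]
  have : (1 / 2 + -(R / ε) / 2 + -Q / 2) * (2 * ε) = ε - R - Q * ε := by field_simp; ring
  rw [this]
  nlinarith [mul_le_mul_of_nonneg_right hRQ (sub_nonneg.mpr hε1)]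

lemma exists_one_le_rpow_mul_rpow_pow (a : ℝ) {e : ℝ} (he : e < 0) :
    ∃ n : ℕ, ∀ ε ∈ Ioc (0 : ℝ) 1, 1 ≤ ε ^ a * (ε ^ e) ^ n := by
  refine ⟨⌈a / -e⌉₊, fun ε ⟨hε, hε1⟩ => ?_⟩
  have hn : a + e * ⌈a / -e⌉₊ ≤ 0 := by
    have := Nat.le_ceil (a / -e)
    rw [div_le_iff₀ (neg_pos.mpr he)] at this
    linarith
  rw [← rpow_natCast, ← rpow_mul hε.le, ← rpow_add hε]
  exact one_le_rpow_of_pos_of_le_one_of_nonpos hε hε1 hn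

lemma Matrix.PosDef.exists_integrable_majorant {ι : Type*} [Fintype ι] {A : Matrix ι ι ℝ}
    (hA : A.PosDef) (x : ι → ℝ) {φ : (ι → ℝ) → ℝ} {C₁ C₂ : ℝ} {k : ℕ}
    (hgrow : ∀ y, |φ y| ≤ C₁ + C₂ * ‖y - x‖ ^ k) :
    ∃ G : (ι → ℝ) → ℝ, Integrable G ∧
      ∀ y, exp (-((y - x) ⬝ᵥ A *ᵥ (y - x)) / 2) * |φ y| ≤ G y := by
  obtain ⟨c, hc, hcoer⟩ := hA.exists_pos_mul_sq_norm_le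
  refine ⟨fun y => (C₁ + C₂ * ‖y - x‖ ^ k) * exp (-(c / 2) * ‖y - x‖ ^ 2), ?_, fun y => ?_⟩
  · have hgauss (j : ℕ) := integrable_pow_norm_mul_exp_neg_mul_sq_norm
      (volume : Measure (ι → ℝ)) (half_pos hc) j
    refine (((hgauss 0).const_mul C₁).add ((hgauss k).const_mul C₂)).comp_sub_right x
      |>.congr (.of_forall fun y => ?_)
    simp only [Pi.add_apply, pow_zero, one_mul]
    ring
  · refine (mul_le_mul (exp_le_exp.mpr ?_) (hgrow y) (abs_nonneg _) (exp_pos _).le).trans_eq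
      (mul_comm _ _)
    linarith [hcoer (y - x)]

lemma abs_setIntegral_exp_neg_div_le {α : Type*} [MeasurableSpace α] {ν : Measure α}
    {Q f G : α → ℝ} (hG : Integrable G ν) (hfG : ∀ y, exp (-Q y / 2) * |f y| ≤ G y)
    {ε R : ℝ} (hε : 0 < ε) (hε1 : ε ≤ 1) (hR : R ≤ 1) (hS : MeasurableSet {y | R < Q y}) :
    |∫ y in {y | R < Q y}, exp (-Q y / (2 * ε)) * f y ∂ν|
      ≤ exp (1 / 2) * exp (-(R / ε) / 2) * ∫ y, G y ∂ν := by
  have hG0 (y) : 0 ≤ G y := (by positivity : (0 : ℝ) ≤ _).trans (hfG y)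
  calc _ ≤ ∫ y in {y | R < Q y}, exp (1 / 2) * exp (-(R / ε) / 2) * G y ∂ν := by
        rw [← Real.norm_eq_abs]
        refine norm_integral_le_of_norm_le (hG.const_mul _).restrict
          ((ae_restrict_iff' hS).mpr (.of_forall fun y hy => ?_))
        rw [norm_mul, norm_of_nonneg (exp_pos _).le, Real.norm_eq_abs]
        calc _ ≤ _ * |f y| :=
              mul_le_mul_of_nonneg_right (exp_neg_div_two_mul_le hε hε1 hR hy.le) (abs_nonneg _)
          _ ≤ _ := by
              rw [mul_assoc]
              exact mul_le_mul_of_nonneg_left (hfG y) (by positivity)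
    _ ≤ exp (1 / 2) * exp (-(R / ε) / 2) * ∫ y, G y ∂ν := by
        rw [integral_const_mul]
        exact mul_le_mul_of_nonneg_left (setIntegral_le_integral hG (.of_forall hG0))
          (by positivity)

theorem stmt4_general (d : ℕ) (A : Matrix (Fin d) (Fin d) ℝ) (hA : A.PosDef)
    (x : Fin d → ℝ) (φ : (Fin d → ℝ) → ℝ)
    (C₁ C₂ : ℝ) (k : ℕ)
    (hgrow : ∀ y, |φ y| ≤ C₁ + C₂ * ‖y - x‖ ^ k)
    (μ : ℝ) (hμ : μ ∈ Set.Ioo (0:ℝ) (1/2)) :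
    ∃ p : Polynomial ℝ, ∀ᶠ ε in nhdsWithin 0 (Set.Ioi (0:ℝ)),
      |∫ y in {y : Fin d → ℝ | ε ^ (2*μ) < (y - x) ⬝ᵥ A.mulVec (y - x)},
          Real.exp (-((y - x) ⬝ᵥ A.mulVec (y - x)) / (2 * ε)) * φ y|
        ≤ ε ^ ((d:ℝ)/2) * p.eval (ε ^ (2*μ - 1)) * Real.exp (-(ε ^ (2*μ - 1)) / 2) := by
  obtain ⟨G, hG, hφG⟩ := hA.exists_integrable_majorant x hgrow
  have hJ : 0 ≤ ∫ y, G y := integral_nonneg fun y => (by positivity : (0 : ℝ) ≤ _).trans (hφG y)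
  obtain ⟨n, hn⟩ := exists_one_le_rpow_mul_rpow_pow ((d : ℝ) / 2) (e := 2 * μ - 1)
    (by linarith [hμ.2])
  refine ⟨Polynomial.C (exp (1 / 2) * ∫ y, G y) * Polynomial.X ^ n, ?_⟩
  filter_upwards [Ioo_mem_nhdsGT one_pos] with ε ⟨hε, hε1⟩
  have hS : MeasurableSet {y : Fin d → ℝ | ε ^ (2 * μ) < (y - x) ⬝ᵥ A *ᵥ (y - x)} :=
    (isOpen_lt continuous_const (by fun_prop)).measurableSet
  have htail := abs_setIntegral_exp_neg_div_le hG hφG hε hε1.le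
    (rpow_le_one hε.le hε1.le (by linarith [hμ.1])) hS
  rw [← rpow_sub_one hε.ne'] at htail
  simp only [Polynomial.eval_mul, Polynomial.eval_C, Polynomial.eval_pow, Polynomial.eval_X]
  linarith [mul_le_mul_of_nonneg_left (hn ε ⟨hε, hε1.le⟩)
    (by positivity : 0 ≤ exp (1 / 2) * exp (-(ε ^ (2 * μ - 1)) / 2) * ∫ y, G y)]

/-- Gaussian tail estimate: the integral of a Gaussian times a polynomially bounded
function over the exterior of the ellipsoid of radius ε^μ is exponentially small. -/
theorem stmt4 (d : ℕ) (A : Matrix (Fin d) (Fin d) ℝ) (hA : A.PosDef)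
    (x : Fin d → ℝ) (φ : (Fin d → ℝ) → ℝ) (hφ : Continuous φ)
    (C₁ C₂ : ℝ) (hC₁ : 0 ≤ C₁) (hC₂ : 0 ≤ C₂) (k : ℕ)
    (hgrow : ∀ y, |φ y| ≤ C₁ + C₂ * ‖y - x‖ ^ k)
    (μ : ℝ) (hμ : μ ∈ Set.Ioo (0:ℝ) (1/2)) :
    ∃ p : Polynomial ℝ, ∀ᶠ ε in nhdsWithin 0 (Set.Ioi (0:ℝ)),
      |∫ y in {y : Fin d → ℝ | ε ^ (2*μ) < (y - x) ⬝ᵥ A.mulVec (y - x)},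
          Real.exp (-((y - x) ⬝ᵥ A.mulVec (y - x)) / (2 * ε)) * φ y|
        ≤ ε ^ ((d:ℝ)/2) * p.eval (ε ^ (2*μ - 1)) * Real.exp (-(ε ^ (2*μ - 1)) / 2) :=
  stmt4_general d A hA x φ C₁ C₂ k hgrow μ hμ
end
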